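/- arXiv:2406.12988 — 2 statements merged into one kernel-verified Lean document; each statement's English description precedes it below -/
import Mathlib

section
/- Let q ≥ 2 be a real number. For every Schwartz function f : ℝ → ℂ and every x ∈ ℝ, |f(x)|^q ≤ q · (∫_ℝ |f|^{2(q−1)} ds)^{1/2} · (∫_ℝ |f'|² ds)^{1/2}. -/
/-!
Since `f` vanishes at `+∞`, `‖f x‖ ^ q = -∫_{s > x} (‖f‖ ^ q)'`. The derivative of `‖f‖ ^ q` is
`q ‖f‖ ^ (q - 2) ⟪f, f'⟫`, which is bounded by `q ‖f‖ ^ (q - 1) ‖f'‖`; the Cauchy–Schwarz inequality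
on the whole line then gives the bound.
-/

open MeasureTheory Filter Topology Set
open scoped RealInnerProductSpace ENNReal

section InnerProductSpace

variable {E : Type*} [NormedAddCommGroup E] [InnerProductSpace ℝ E]

theorem HasDerivAt.norm_rpow {f : ℝ → E} {f' : E} {t p : ℝ} (hf : HasDerivAt f f' t)
    (hp : 1 < p) :
    HasDerivAt (fun s => ‖f s‖ ^ p) (p * ‖f t‖ ^ (p - 2) * ⟪f t, f'⟫) t := by
  have h := ((hasFDerivAt_norm_rpow (f t) hp).comp t hf.hasFDerivAt).hasDerivAt
  simpa [Function.comp_def, mul_assoc] using h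

theorem abs_mul_norm_rpow_inner_le {p : ℝ} (hp : 1 < p) (x v : E) :
    |p * ‖x‖ ^ (p - 2) * ⟪x, v⟫| ≤ p * (‖x‖ ^ (p - 1) * ‖v‖) := by
  have hpow : ‖x‖ ^ (p - 2) * ‖x‖ = ‖x‖ ^ (p - 1) := by
    rcases eq_or_ne x 0 with rfl | hx
    · simp [Real.zero_rpow (by linarith : p - 1 ≠ 0)]
    · rw [← Real.rpow_add_one (norm_ne_zero_iff.mpr hx)]; ring_nf
  calc |p * ‖x‖ ^ (p - 2) * ⟪x, v⟫| = p * ‖x‖ ^ (p - 2) * |⟪x, v⟫| := by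
        rw [abs_mul, abs_of_nonneg (by positivity)]
    _ ≤ p * ‖x‖ ^ (p - 2) * (‖x‖ * ‖v‖) := by gcongr; exact abs_real_inner_le_norm x v
    _ = p * (‖x‖ ^ (p - 1) * ‖v‖) := by rw [← hpow]; ring

theorem norm_rpow_le_setIntegral_Ioi {f : ℝ → E} (hf : ContDiff ℝ 1 f)
    (hlim : Tendsto f atTop (𝓝 0)) {q : ℝ} (hq : 1 < q)
    (hint : Integrable (fun s => ‖f s‖ ^ (q - 1) * ‖deriv f s‖)) (x : ℝ) :
    ‖f x‖ ^ q ≤ q * ∫ s in Ioi x, ‖f s‖ ^ (q - 1) * ‖deriv f s‖ := by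
  set D : ℝ → ℝ := fun s => q * ‖f s‖ ^ (q - 2) * ⟪f s, deriv f s⟫
  have hderiv : ∀ s, HasDerivAt (fun t => ‖f t‖ ^ q) (D s) s := fun s =>
    ((hf.differentiable one_ne_zero) s).hasDerivAt.norm_rpow hq
  have hD_meas : AEStronglyMeasurable D :=
    ((measurable_const.mul (hf.continuous.norm.measurable.pow_const _)).mul
      (hf.continuous.inner (hf.continuous_deriv le_rfl)).measurable).aestronglyMeasurable
  have hD_int : Integrable D :=
    (hint.const_mul q).mono' hD_meas
      (Eventually.of_forall fun s => abs_mul_norm_rpow_inner_le hq (f s) (deriv f s))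
  have hlim_pow : Tendsto (fun t => ‖f t‖ ^ q) atTop (𝓝 0) := by
    simpa [Function.comp_def, Real.zero_rpow (by linarith : q ≠ 0)] using
      ((Real.continuous_rpow_const (by linarith : 0 ≤ q)).tendsto 0).comp
        (tendsto_zero_iff_norm_tendsto_zero.mp hlim)
  have hFTC : ∫ s in Ioi x, D s = 0 - ‖f x‖ ^ q :=
    integral_Ioi_of_hasDerivAt_of_tendsto' (fun s _ => hderiv s) hD_int.integrableOn hlim_pow
  calc ‖f x‖ ^ q = ∫ s in Ioi x, -D s := by rw [integral_neg, hFTC]; ring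
    _ ≤ ∫ s in Ioi x, q * (‖f s‖ ^ (q - 1) * ‖deriv f s‖) :=
        setIntegral_mono hD_int.neg.integrableOn (hint.const_mul q).integrableOn fun s =>
          (neg_le_abs _).trans (abs_mul_norm_rpow_inner_le hq (f s) (deriv f s))
    _ = q * ∫ s in Ioi x, ‖f s‖ ^ (q - 1) * ‖deriv f s‖ := integral_const_mul q _

theorem norm_rpow_le_mul_sqrt_integral_mul_sqrt_integral_deriv {f : ℝ → E} (hf : ContDiff ℝ 1 f)
    (hlim : Tendsto f atTop (𝓝 0)) {q : ℝ} (hq : 1 < q)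
    (hF : MemLp (fun s => ‖f s‖ ^ (q - 1)) 2) (hG : MemLp (deriv f) 2) (x : ℝ) :
    ‖f x‖ ^ q ≤ q * (∫ s, ‖f s‖ ^ (2 * (q - 1))) ^ ((1 : ℝ) / 2)
        * (∫ s, ‖deriv f s‖ ^ 2) ^ ((1 : ℝ) / 2) := by
  have hint : Integrable (fun s => ‖f s‖ ^ (q - 1) * ‖deriv f s‖) := hF.integrable_mul hG.norm
  have hCS := integral_mul_le_Lp_mul_Lq_of_nonneg Real.HolderConjugate.two_two
    (Eventually.of_forall fun s => Real.rpow_nonneg (norm_nonneg (f s)) (q - 1))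
    (Eventually.of_forall fun s => norm_nonneg (deriv f s))
    (by rwa [ENNReal.ofReal_ofNat]) (by rw [ENNReal.ofReal_ofNat]; exact hG.norm)
  simp only [← Real.rpow_mul (norm_nonneg _), Real.rpow_two] at hCS
  calc ‖f x‖ ^ q ≤ q * ∫ s in Ioi x, ‖f s‖ ^ (q - 1) * ‖deriv f s‖ :=
        norm_rpow_le_setIntegral_Ioi hf hlim hq hint x
    _ ≤ q * ∫ s, ‖f s‖ ^ (q - 1) * ‖deriv f s‖ :=
        mul_le_mul_of_nonneg_left
          (setIntegral_le_integral hint (Eventually.of_forall fun s => by positivity))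
          (by linarith)
    _ ≤ _ := by rw [mul_assoc]; gcongr; simpa only [mul_comm (q - 1)] using hCS

end InnerProductSpace

theorem SchwartzMap.memLp_norm_rpow {E F : Type*} [NormedAddCommGroup E] [NormedSpace ℝ E]
    [NormedAddCommGroup F] [NormedSpace ℝ F] [MeasurableSpace E] [OpensMeasurableSpace E]
    [SecondCountableTopologyEither E F] (f : SchwartzMap E F) {r : ℝ} (hr : 0 < r) (p : ℝ≥0∞)
    (μ : Measure E := by volume_tac) [μ.HasTemperateGrowth] : MemLp (fun x => ‖f x‖ ^ r) p μ := by
  have h := (f.memLp (p * ENNReal.ofReal r) μ).norm_rpow_div (ENNReal.ofReal r)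
  rwa [ENNReal.toReal_ofReal hr.le, ENNReal.mul_div_cancel_right (by simpa using hr)
    ENNReal.ofReal_ne_top] at h

/-- One-dimensional Agmon-type inequality with first derivative. -/
theorem stmt_1 (q : ℝ) (hq : 2 ≤ q) (f : SchwartzMap ℝ ℂ) (x : ℝ) :
    ‖f x‖ ^ q ≤
      q * (∫ s : ℝ, ‖f s‖ ^ (2 * (q - 1))) ^ ((1 : ℝ) / 2)
        * (∫ s : ℝ, ‖deriv (fun t => f t) s‖ ^ 2) ^ ((1 : ℝ) / 2) := by
  have hderiv : deriv f = SchwartzMap.derivCLM ℝ ℂ f :=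
    funext fun s => (SchwartzMap.derivCLM_apply ℝ f s).symm
  refine norm_rpow_le_mul_sqrt_integral_mul_sqrt_integral_deriv (f.smooth 1)
    (f.tendsto_cocompact.mono_left atTop_le_cocompact) (by linarith)
    (f.memLp_norm_rpow (r := q - 1) (by linarith) 2)
    (hderiv ▸ (SchwartzMap.derivCLM ℝ ℂ f).memLp 2) x
end

section
/- Let p > 2 and let u : ℝ² → ℂ be a Schwartz function. Then the map λ ↦ E(u_λ) is differentiable on (0,∞) and its derivative at λ = 1 equals (1/2)·Q(u), where Q(u) = X(u) + Y(u) − (3(p−2)/(4p))·P(u). -/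
open MeasureTheory

noncomputable section

/-- Partial derivative in the first (x) variable. -/
def pdx (u : ℝ × ℝ → ℂ) : ℝ × ℝ → ℂ := fun z => deriv (fun x => u (x, z.2)) z.1

/-- Partial derivative in the second (y) variable. -/
def pdy (u : ℝ × ℝ → ℂ) : ℝ × ℝ → ℂ := fun z => deriv (fun y => u (z.1, y)) z.2

/-- Second partial derivative in x. -/
def pdxx (u : ℝ × ℝ → ℂ) : ℝ × ℝ → ℂ := pdx (pdx u)

/-- Second partial derivative in y. -/
def pdyy (u : ℝ × ℝ → ℂ) : ℝ × ℝ → ℂ := pdy (pdy u)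

/-- Fourth partial derivative in y. -/
def pdyyyy (u : ℝ × ℝ → ℂ) : ℝ × ℝ → ℂ := pdy (pdy (pdy (pdy u)))

/-- X(u) = ∫ |∂ₓ u|². -/
def Xf (u : ℝ × ℝ → ℂ) : ℝ := ∫ z : ℝ × ℝ, ‖pdx u z‖ ^ 2

/-- Y(u) = ∫ |∂_yy u|². -/
def Yf (u : ℝ × ℝ → ℂ) : ℝ := ∫ z : ℝ × ℝ, ‖pdyy u z‖ ^ 2

/-- M(u) = ∫ |u|². -/
def Mf (u : ℝ × ℝ → ℂ) : ℝ := ∫ z : ℝ × ℝ, ‖u z‖ ^ 2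

/-- P(u) = ∫ |u|ᵖ. -/
def Pf (p : ℝ) (u : ℝ × ℝ → ℂ) : ℝ := ∫ z : ℝ × ℝ, ‖u z‖ ^ p

/-- Energy E(u) = X(u)/2 + Y(u)/2 − P(u)/p. -/
def Ef (p : ℝ) (u : ℝ × ℝ → ℂ) : ℝ := Xf u / 2 + Yf u / 2 - Pf p u / p

/-- Action J_ω(u) = X(u)/2 + Y(u)/2 + (ω/2) M(u) − P(u)/p. -/
def Jf (p ω : ℝ) (u : ℝ × ℝ → ℂ) : ℝ := Xf u / 2 + Yf u / 2 + ω / 2 * Mf u - Pf p u / p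

/-- Standing wave equation −∂ₓₓu + ∂_yyyy u + ω u = |u|^{p−2} u pointwise. -/
def IsStandingWave (p ω : ℝ) (u : ℝ × ℝ → ℂ) : Prop :=
  ∀ z : ℝ × ℝ, -pdxx u z + pdyyyy u z + (ω : ℂ) * u z = ((‖u z‖ ^ (p - 2) : ℝ) : ℂ) * u z

/-- Mass-preserving anisotropic scaling u_λ(x,y) = λ^{3/8} u(λ^{1/2} x, λ^{1/4} y). -/
def uscale (l : ℝ) (u : ℝ × ℝ → ℂ) : ℝ × ℝ → ℂ :=
  fun z => ((l ^ ((3 : ℝ) / 8) : ℝ) : ℂ) * u (l ^ ((1 : ℝ) / 2) * z.1, l ^ ((1 : ℝ) / 4) * z.2)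

end

/-! Each term of the energy is homogeneous under the scaling: the Jacobian of
`(x, y) ↦ (λ^{1/2} x, λ^{1/4} y)` is `λ^{-3/4}`, so `X(u_λ) = λ X(u)`, `Y(u_λ) = λ Y(u)` and
`P(u_λ) = λ^{3(p-2)/8} P(u)`. Thus `E(u_λ) = λ (X + Y)/2 - λ^{3(p-2)/8} P/p` for `λ > 0`, an
explicit differentiable function of `λ`. -/

theorem integral_comp_mul_prod_mul {F : Type*} [NormedAddCommGroup F] [NormedSpace ℝ F]
    (g : ℝ × ℝ → F) {s t : ℝ} (hs : s ≠ 0) (ht : t ≠ 0) :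
    ∫ z : ℝ × ℝ, g (s * z.1, t * z.2) = |(s * t)⁻¹| • ∫ z : ℝ × ℝ, g z := by
  have hmap : Measure.map (Prod.map (s * ·) (t * ·)) (volume : Measure (ℝ × ℝ))
      = ENNReal.ofReal |(s * t)⁻¹| • volume := by
    rw [Measure.volume_eq_prod, ← Measure.map_prod_map _ _ (measurable_const_mul s)
      (measurable_const_mul t), Real.map_volume_mul_left hs, Real.map_volume_mul_left ht,
      Measure.prod_smul_left, Measure.prod_smul_right, smul_smul, ← ENNReal.ofReal_mul
      (abs_nonneg _), ← abs_mul, mul_inv]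
  have hemb := (measurableEmbedding_mulLeft₀ hs).prodMap (measurableEmbedding_mulLeft₀ ht)
  rw [← ENNReal.toReal_ofReal (abs_nonneg (s * t)⁻¹), ← integral_smul_measure, ← hmap,
    hemb.integral_map]
  rfl

section Rescaling

variable (f : ℝ × ℝ → ℂ) (c : ℂ) (s t : ℝ)

theorem pdx_const_mul_comp_mul :
    pdx (fun z => c * f (s * z.1, t * z.2))
      = fun z => c * (s : ℂ) * pdx f (s * z.1, t * z.2) := by
  funext z
  simp only [pdx, deriv_const_mul_field']
  rw [deriv_comp_mul_left s (fun x => f (x, t * z.2)), Complex.real_smul, mul_assoc]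

theorem pdy_const_mul_comp_mul :
    pdy (fun z => c * f (s * z.1, t * z.2))
      = fun z => c * (t : ℂ) * pdy f (s * z.1, t * z.2) := by
  funext z
  simp only [pdy, deriv_const_mul_field']
  rw [deriv_comp_mul_left t (fun y => f (s * z.1, y)), Complex.real_smul, mul_assoc]

theorem pdyy_const_mul_comp_mul :
    pdyy (fun z => c * f (s * z.1, t * z.2))
      = fun z => c * (t : ℂ) * (t : ℂ) * pdyy f (s * z.1, t * z.2) := by
  rw [pdyy, pdy_const_mul_comp_mul, pdy_const_mul_comp_mul, pdyy]

variable {s t}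

theorem Xf_const_mul_comp_mul (hs : s ≠ 0) (ht : t ≠ 0) :
    Xf (fun z => c * f (s * z.1, t * z.2)) = ‖c‖ ^ 2 * s ^ 2 * |(s * t)⁻¹| * Xf f := by
  simp only [Xf, pdx_const_mul_comp_mul, norm_mul, mul_pow, Complex.norm_real, Real.norm_eq_abs,
    sq_abs, integral_const_mul, integral_comp_mul_prod_mul (fun z => ‖pdx f z‖ ^ 2) hs ht,
    smul_eq_mul]
  ring

theorem Yf_const_mul_comp_mul (hs : s ≠ 0) (ht : t ≠ 0) :
    Yf (fun z => c * f (s * z.1, t * z.2)) = ‖c‖ ^ 2 * t ^ 4 * |(s * t)⁻¹| * Yf f := by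
  simp only [Yf, pdyy_const_mul_comp_mul, norm_mul, mul_pow, Complex.norm_real, Real.norm_eq_abs,
    sq_abs, integral_const_mul, integral_comp_mul_prod_mul (fun z => ‖pdyy f z‖ ^ 2) hs ht,
    smul_eq_mul]
  ring

theorem Pf_const_mul_comp_mul (p : ℝ) (hs : s ≠ 0) (ht : t ≠ 0) :
    Pf p (fun z => c * f (s * z.1, t * z.2)) = ‖c‖ ^ p * |(s * t)⁻¹| * Pf p f := by
  simp only [Pf, norm_mul, Real.mul_rpow (norm_nonneg _) (norm_nonneg _), integral_const_mul,
    integral_comp_mul_prod_mul (fun z => ‖f z‖ ^ p) hs ht, smul_eq_mul]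
  ring

end Rescaling

section Uscale

variable (u : ℝ × ℝ → ℂ) {l : ℝ}

theorem Xf_uscale (hl : 0 < l) : Xf (uscale l u) = l * Xf u := by
  unfold uscale
  rw [Xf_const_mul_comp_mul _ _ (by positivity) (by positivity),
    Complex.norm_of_nonneg (by positivity), abs_of_pos (by positivity)]
  congr 1
  simp only [← Real.rpow_natCast, ← Real.rpow_mul hl.le, ← Real.rpow_add hl,
    ← Real.rpow_neg hl.le]
  norm_num

theorem Yf_uscale (hl : 0 < l) : Yf (uscale l u) = l * Yf u := by
  unfold uscale
  rw [Yf_const_mul_comp_mul _ _ (by positivity) (by positivity),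
    Complex.norm_of_nonneg (by positivity), abs_of_pos (by positivity)]
  congr 1
  simp only [← Real.rpow_natCast, ← Real.rpow_mul hl.le, ← Real.rpow_add hl,
    ← Real.rpow_neg hl.le]
  norm_num

theorem Pf_uscale (p : ℝ) (hl : 0 < l) :
    Pf p (uscale l u) = l ^ (3 * (p - 2) / 8) * Pf p u := by
  unfold uscale
  rw [Pf_const_mul_comp_mul _ _ _ (by positivity) (by positivity),
    Complex.norm_of_nonneg (by positivity), abs_of_pos (by positivity)]
  congr 1
  simp only [← Real.rpow_mul hl.le, ← Real.rpow_add hl, ← Real.rpow_neg hl.le]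
  ring_nf

theorem Ef_uscale (p : ℝ) (hl : 0 < l) :
    Ef p (uscale l u) = l * (Xf u / 2 + Yf u / 2) - l ^ (3 * (p - 2) / 8) * (Pf p u / p) := by
  rw [Ef, Xf_uscale u hl, Yf_uscale u hl, Pf_uscale u p hl]
  ring

theorem hasDerivAt_Ef_uscale (p : ℝ) (hl : 0 < l) :
    HasDerivAt (fun t => Ef p (uscale t u))
      (Xf u / 2 + Yf u / 2 - 3 * (p - 2) / 8 * l ^ (3 * (p - 2) / 8 - 1) * (Pf p u / p)) l := by
  have hpow := (hasDerivAt_mul_const (x := l) (Xf u / 2 + Yf u / 2)).sub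
    ((Real.hasDerivAt_rpow_const (p := 3 * (p - 2) / 8) (Or.inl hl.ne')).mul_const (Pf p u / p))
  refine hpow.congr_of_eventuallyEq ?_
  filter_upwards [Ioi_mem_nhds hl] with t ht using Ef_uscale u p ht

end Uscale

theorem stmt_10_general (p : ℝ) (u : SchwartzMap (ℝ × ℝ) ℂ) :
    (∀ l ∈ Set.Ioi (0 : ℝ), DifferentiableAt ℝ (fun t => Ef p (uscale t (fun z => u z))) l)
      ∧ deriv (fun t => Ef p (uscale t (fun z => u z))) 1 =
          (1 / 2) * (Xf (fun z => u z) + Yf (fun z => u z)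
            - (3 * (p - 2) / (4 * p)) * Pf p (fun z => u z)) := by
  refine ⟨fun l hl => (hasDerivAt_Ef_uscale _ p hl).differentiableAt, ?_⟩
  rw [(hasDerivAt_Ef_uscale _ p one_pos).deriv, Real.one_rpow]
  ring

/-- λ ↦ E(u_λ) is differentiable on (0,∞) with derivative Q(u)/2 at λ = 1. -/
theorem stmt_10 (p : ℝ) (hp : 2 < p) (u : SchwartzMap (ℝ × ℝ) ℂ) :
    (∀ l ∈ Set.Ioi (0 : ℝ), DifferentiableAt ℝ (fun t => Ef p (uscale t (fun z => u z))) l)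
      ∧ deriv (fun t => Ef p (uscale t (fun z => u z))) 1 =
          (1 / 2) * (Xf (fun z => u z) + Yf (fun z => u z)
            - (3 * (p - 2) / (4 * p)) * Pf p (fun z => u z)) :=
  stmt_10_general p u
end
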